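/- Let F ⊆ R⟨X⟩ and let f lie in the two-sided ideal (F). Then for every labelled quiver Q such that all elements of F are uniformly compatible with Q, f is compatible with Q if and only if f is a Q-consequence of F. -/

import Mathlib

open scoped BigOperators

/-- The free `R`-algebra `R⟨X⟩` on `X`, as the monoid algebra over `R`
of the free monoid `⟨X⟩` of words over `X`. -/
abbrev FreeAlg (R X : Type*) [CommRing R] := MonoidAlgebra R (FreeMonoid X)

/-- The monomial in `R⟨X⟩` corresponding to a word `m ∈ ⟨X⟩`. -/
noncomputable def monom (R : Type*) [CommRing R] {X : Type*} (m : FreeMonoid X) : FreeAlg R X :=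
  MonoidAlgebra.of R (FreeMonoid X) m

/-- `h` is obtained from `f` by a rewriting step using `g`: some monomial `m_g` in the
support of `g` divides a monomial `a·m_g·b` in the support of `f`, and
`h = f + λ·a·g·b` for some `λ ∈ R`. -/
def RewriteStep {R X : Type*} [CommRing R] (g f h : FreeAlg R X) : Prop :=
  ∃ (a b mg : FreeMonoid X) (lam : R),
    mg ∈ (g.coeff : FreeMonoid X →₀ R).support ∧
    a * mg * b ∈ (f.coeff : FreeMonoid X →₀ R).support ∧
    h = f + lam • (monom R a * g * monom R b)

/-- `f` can be rewritten to `h` using the set `G`: there is a finite chain of rewriting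
steps, each using an element of `G`, leading from `f` to `h`. -/
def RewritesTo {R X : Type*} [CommRing R] (G : Set (FreeAlg R X)) (f h : FreeAlg R X) : Prop :=
  Relation.ReflTransGen (fun p q => ∃ g ∈ G, RewriteStep g p q) f h

/-- Membership in the two-sided ideal `(F)` generated by `F`:
`f` is a finite sum `Σᵢ aᵢ·fᵢ·bᵢ` with `aᵢ, bᵢ ∈ R⟨X⟩` and `fᵢ ∈ F`. -/
def MemIdeal {R X : Type*} [CommRing R] (F : Set (FreeAlg R X)) (f : FreeAlg R X) : Prop :=
  ∃ (n : ℕ) (a b g : Fin n → FreeAlg R X),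
    (∀ i, g i ∈ F) ∧ f = ∑ i, a i * g i * b i

/-- A labelled quiver `Q = (V, E, X, s, t, l)`: a directed multigraph with vertex set `V`,
edge set `E`, source and target maps `s, t : E → V` and labelling `l : E → X`. -/
structure LabelledQuiver (V E X : Type*) where
  src : E → V
  tgt : E → V
  lab : E → X

/-- Paths in a labelled quiver `Q`; `LQPath Q u w` is the type of paths with source `u` and
target `w`.  `nil v` is the empty path at `v`; `cons e p` appends the edge `e` after `p`. -/
inductive LQPath {V E X : Type*} (Q : LabelledQuiver V E X) : V → V → Type _ where
  | nil (v : V) : LQPath Q v v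
  | cons {u : V} (e : E) (p : LQPath Q u (Q.src e)) : LQPath Q u (Q.tgt e)

namespace LQPath
variable {V E X : Type*} {Q : LabelledQuiver V E X}
/-- The label `l(p) = l(eₙ)⋯l(e₁) ∈ ⟨X⟩` of a path; the empty path has label `1`. -/
def label : {u w : V} → LQPath Q u w → FreeMonoid X
  | _, _, .nil _ => 1
  | _, _, .cons e p => FreeMonoid.of (Q.lab e) * p.label
end LQPath

namespace LabelledQuiver

variable {V E X : Type*} (Q : LabelledQuiver V E X)

/-- The set of signatures `σ(m) = {(s(p), t(p)) : p a path in Q with l(p) = m}`. -/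
def sigmaM (m : FreeMonoid X) : Set (V × V) :=
  {vw | ∃ p : LQPath Q vw.1 vw.2, p.label = m}

variable {R : Type*} [CommRing R]

/-- The set of signatures `σ(f) = ⋂_{m ∈ supp(f)} σ(m)` of a polynomial. -/
def sigmaP (f : FreeAlg R X) : Set (V × V) :=
  ⋂ m ∈ (f.coeff : FreeMonoid X →₀ R).support, Q.sigmaM m

/-- `f` is compatible with `Q` if `σ(f) ≠ ∅`. -/
def Compatible (f : FreeAlg R X) : Prop :=
  (Q.sigmaP f).Nonempty

/-- `f` is uniformly compatible with `Q` if it is compatible and all monomials in its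
support have the same set of signatures. -/
def UniformlyCompatible (f : FreeAlg R X) : Prop :=
  Q.Compatible f ∧
    ∀ m ∈ (f.coeff : FreeMonoid X →₀ R).support, ∀ m' ∈ (f.coeff : FreeMonoid X →₀ R).support,
      Q.sigmaM m = Q.sigmaM m'

/-- The set of sources `s(f)` of a polynomial: the projection of `σ(f)` to the first
component. -/
def srcSet (f : FreeAlg R X) : Set V := Prod.fst '' Q.sigmaP f

/-- The set of targets `t(f)` of a polynomial: the projection of `σ(f)` to the second
component. -/
def tgtSet (f : FreeAlg R X) : Set V := Prod.snd '' Q.sigmaP f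

end LabelledQuiver

/-- `f` is a `Q`-consequence of `F`: `f` is compatible with `Q` and there are finitely many
uniformly compatible `aᵢ, bᵢ` and `fᵢ ∈ F` with `f = Σᵢ aᵢ·fᵢ·bᵢ` where each summand
satisfies `σ(aᵢ·fᵢ·bᵢ) ⊇ σ(f)`. -/
def LabelledQuiver.QConsequence {V E X R : Type*} [CommRing R] (Q : LabelledQuiver V E X)
    (F : Set (FreeAlg R X)) (f : FreeAlg R X) : Prop :=
  Q.Compatible f ∧
    ∃ (n : ℕ) (a b g : Fin n → FreeAlg R X),
      (∀ i, Q.UniformlyCompatible (a i)) ∧ (∀ i, Q.UniformlyCompatible (b i)) ∧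
      (∀ i, g i ∈ F) ∧ f = ∑ i, a i * g i * b i ∧
      ∀ i, Q.sigmaP f ⊆ Q.sigmaP (a i * g i * b i)

/-! Every monomial of a sandwich `m·g·w` with `g` uniformly compatible has the same signature set
`σ(w) ○ σ(g) ○ σ(m)` (relations composed left to right). Expand `f ∈ (F)` into such monomial
sandwiches. At a monomial `μ` with `σ(f) ⊆ σ(μ)` only sandwiches whose signature set contains
`σ(f)` contribute, and at any other monomial, which lies outside the support of `f`, none of them
do. So the remaining sandwiches sum to zero and can be dropped, and what is left is a
`Q`-consequence. -/

open scoped SetRel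

theorem Finsupp.sum_filter_eq_sum_of_homogeneous {ι M R α : Type*} [AddCommMonoid R]
    (s : Finset ι) (t : ι → M →₀ R) (φ : M → α) (T : ι → α) (P : α → Prop) [DecidablePred P]
    (ht : ∀ i, ∀ μ ∈ (t i).support, φ μ = T i)
    (hP : ∀ μ ∈ (∑ i ∈ s, t i).support, P (φ μ)) :
    ∑ i ∈ s with P (T i), t i = ∑ i ∈ s, t i := by
  ext μ
  simp only [Finsupp.finsetSum_apply]
  by_cases hμ : P (φ μ)
  · refine Finset.sum_filter_of_ne fun i _ hi => ?_
    rwa [← ht i μ (Finsupp.mem_support_iff.mpr hi)]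
  · have hzero : ∑ i ∈ s, t i μ = 0 := by
      simpa only [Finsupp.finsetSum_apply] using Finsupp.notMem_support_iff.mp (mt (hP μ) hμ)
    rw [hzero]
    refine Finset.sum_eq_zero fun i hi => ?_
    by_contra hne
    exact hμ (ht i μ (Finsupp.mem_support_iff.mpr hne) ▸ (Finset.mem_filter.mp hi).2)

theorem MonoidAlgebra.mul_mul_eq_sum_single_mul_mul_single {k G : Type*} [Semiring k] [Monoid G]
    (a g b : MonoidAlgebra k G) :
    a * g * b = ∑ m ∈ a.coeff.support, ∑ w ∈ b.coeff.support,
      single m (a.coeff m) * g * single w (b.coeff w) := by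
  conv_lhs => rw [← sum_coeff_single a, ← sum_coeff_single b]
  simp only [Finsupp.sum, Finset.sum_mul, Finset.mul_sum]
  exact Finset.sum_comm

namespace LQPath

variable {V E X : Type*} {Q : LabelledQuiver V E X}

def comp : {u v w : V} → LQPath Q v w → LQPath Q u v → LQPath Q u w
  | _, _, _, .nil _, q => q
  | _, _, _, .cons e p, q => .cons e (p.comp q)

theorem label_comp {u v w : V} (p : LQPath Q v w) (q : LQPath Q u v) :
    (p.comp q).label = p.label * q.label := by
  induction p with
  | nil => rw [comp, label, one_mul]
  | cons e p ih => rw [comp, label, label, ih, mul_assoc]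

theorem exists_comp_of_label_eq_mul {u w : V} (p : LQPath Q u w) {m₁ m₂ : FreeMonoid X}
    (h : p.label = m₁ * m₂) :
    ∃ (x : V) (q : LQPath Q x w) (r : LQPath Q u x), q.label = m₁ ∧ r.label = m₂ := by
  induction p generalizing m₁ with
  | nil =>
    rw [label] at h
    obtain ⟨rfl, rfl⟩ := mul_eq_one'.mp h.symm
    exact ⟨_, .nil _, .nil _, label.eq_1 _, label.eq_1 _⟩
  | cons e p ih =>
    cases m₁ using FreeMonoid.casesOn with
    | one => exact ⟨_, .nil _, .cons e p, label.eq_1 _, by rw [h, one_mul]⟩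
    | of_mul y m₁ =>
      rw [label, mul_assoc] at h
      obtain ⟨hy, hp⟩ := List.cons_eq_cons.mp (congrArg FreeMonoid.toList h)
      obtain ⟨x, q, r, hq, hr⟩ := ih hp
      exact ⟨x, .cons e q, r, by rw [label, hq, hy], hr⟩

end LQPath

namespace LabelledQuiver

variable {V E X : Type*} {Q : LabelledQuiver V E X}

theorem sigmaM_mul (m₁ m₂ : FreeMonoid X) :
    Q.sigmaM (m₁ * m₂) = Q.sigmaM m₂ ○ Q.sigmaM m₁ := by
  ext ⟨u, v⟩
  constructor
  · rintro ⟨p, hp⟩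
    obtain ⟨x, q, r, hq, hr⟩ := p.exists_comp_of_label_eq_mul hp
    exact ⟨x, ⟨r, hr⟩, ⟨q, hq⟩⟩
  · rintro ⟨x, ⟨r, hr⟩, ⟨q, hq⟩⟩
    exact ⟨q.comp r, by rw [LQPath.label_comp, hq, hr]⟩

variable {R : Type*} [CommRing R]

theorem sigmaP_subset_sigmaM {f : FreeAlg R X} {μ : FreeMonoid X}
    (hμ : μ ∈ f.coeff.support) : Q.sigmaP f ⊆ Q.sigmaM μ :=
  Set.biInter_subset_of_mem hμ

theorem subset_sigmaP {f : FreeAlg R X} {S : Set (V × V)}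
    (h : ∀ μ ∈ f.coeff.support, S ⊆ Q.sigmaM μ) : S ⊆ Q.sigmaP f :=
  Set.subset_iInter₂ h

theorem UniformlyCompatible.sigmaP_eq {g : FreeAlg R X} (hg : Q.UniformlyCompatible g)
    {μ : FreeMonoid X} (hμ : μ ∈ g.coeff.support) : Q.sigmaP g = Q.sigmaM μ :=
  (sigmaP_subset_sigmaM hμ).antisymm (subset_sigmaP fun _ hμ' => (hg.2 μ hμ _ hμ').le)

theorem uniformlyCompatible_single {m : FreeMonoid X} {c : R} (hc : c ≠ 0)
    (hm : (Q.sigmaM m).Nonempty) : Q.UniformlyCompatible (MonoidAlgebra.single m c) := by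
  have hsupp : (MonoidAlgebra.single m c : FreeAlg R X).coeff.support = {m} :=
    Finsupp.support_single m hc
  refine ⟨?_, ?_⟩
  · rwa [Compatible, sigmaP, hsupp, Finset.set_biInter_singleton]
  · simp only [hsupp, Finset.mem_singleton]
    rintro _ rfl _ rfl
    rfl

theorem sigmaM_eq_of_mem_support_single_mul_mul_single {g : FreeAlg R X}
    (hg : Q.UniformlyCompatible g) {m w μ : FreeMonoid X} {c d : R}
    (hμ : μ ∈ (MonoidAlgebra.single m c * g * MonoidAlgebra.single w d).coeff.support) :
    Q.sigmaM μ = Q.sigmaM w ○ Q.sigmaP g ○ Q.sigmaM m := by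
  classical
  obtain ⟨ν, hν, rfl⟩ :=
    Finset.mem_image.mp (MonoidAlgebra.support_coeff_mul_single_subset _ _ _ hμ)
  obtain ⟨mg, hmg, rfl⟩ :=
    Finset.mem_image.mp (MonoidAlgebra.support_coeff_single_mul_subset _ _ _ hν)
  rw [sigmaM_mul, sigmaM_mul, hg.sigmaP_eq hmg, SetRel.comp_assoc]

theorem qConsequence_of_eq_sum {ι : Type*} {F : Set (FreeAlg R X)} {f : FreeAlg R X}
    (hf : Q.Compatible f) (s : Finset ι) (a b g : ι → FreeAlg R X)
    (ha : ∀ i ∈ s, Q.UniformlyCompatible (a i)) (hb : ∀ i ∈ s, Q.UniformlyCompatible (b i))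
    (hg : ∀ i ∈ s, g i ∈ F) (hsum : f = ∑ i ∈ s, a i * g i * b i)
    (hσ : ∀ i ∈ s, Q.sigmaP f ⊆ Q.sigmaP (a i * g i * b i)) : Q.QConsequence F f := by
  let e : Fin s.card ≃ s := s.equivFin.symm
  refine ⟨hf, s.card, fun j => a (e j), fun j => b (e j), fun j => g (e j),
    fun j => ha _ (e j).2, fun j => hb _ (e j).2, fun j => hg _ (e j).2, ?_, fun j => hσ _ (e j).2⟩
  rw [hsum, ← Finset.sum_coe_sort s]
  exact (Equiv.sum_comp e fun i : s => a i * g i * b i).symm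

theorem qConsequence_of_eq_sum_single_mul_mul_single {ι : Type*} {F : Set (FreeAlg R X)}
    (hF : ∀ g ∈ F, Q.UniformlyCompatible g) {f : FreeAlg R X} (hf : Q.Compatible f)
    (s : Finset ι) (m w : ι → FreeMonoid X) (c d : ι → R) (g : ι → FreeAlg R X)
    (hc : ∀ i ∈ s, c i ≠ 0) (hd : ∀ i ∈ s, d i ≠ 0) (hg : ∀ i, g i ∈ F)
    (hsum : f = ∑ i ∈ s,
      MonoidAlgebra.single (m i) (c i) * g i * MonoidAlgebra.single (w i) (d i)) :
    Q.QConsequence F f := by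
  classical
  set t : ι → FreeAlg R X :=
    fun i => MonoidAlgebra.single (m i) (c i) * g i * MonoidAlgebra.single (w i) (d i)
  set T : ι → Set (V × V) := fun i => Q.sigmaM (w i) ○ Q.sigmaP (g i) ○ Q.sigmaM (m i)
  have hhom : ∀ i, ∀ μ ∈ (t i).coeff.support, Q.sigmaM μ = T i :=
    fun i _ => sigmaM_eq_of_mem_support_single_mul_mul_single (hF _ (hg i))
  have hcoeff : f.coeff = ∑ i ∈ s, (t i).coeff := by rw [hsum, MonoidAlgebra.coeff_sum]
  have hgood : f = ∑ i ∈ s with Q.sigmaP f ⊆ T i, t i := by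
    refine MonoidAlgebra.coeff_injective ?_
    rw [MonoidAlgebra.coeff_sum,
      Finsupp.sum_filter_eq_sum_of_homogeneous _ _ _ _ (Q.sigmaP f ⊆ ·) hhom, hcoeff]
    exact hcoeff ▸ fun μ => sigmaP_subset_sigmaM
  have hends : ∀ i, Q.sigmaP f ⊆ T i → (Q.sigmaM (m i)).Nonempty ∧ (Q.sigmaM (w i)).Nonempty := by
    intro i hi
    obtain ⟨⟨u, v⟩, y, ⟨x, hux, -⟩, hyv⟩ := hf.mono hi
    exact ⟨⟨_, hyv⟩, ⟨_, hux⟩⟩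
  refine qConsequence_of_eq_sum hf _ _ _ _
    (fun i hi => uniformlyCompatible_single (hc i (Finset.mem_filter.mp hi).1)
      (hends i (Finset.mem_filter.mp hi).2).1)
    (fun i hi => uniformlyCompatible_single (hd i (Finset.mem_filter.mp hi).1)
      (hends i (Finset.mem_filter.mp hi).2).2)
    (fun i _ => hg i) hgood fun i hi => ?_
  exact subset_sigmaP fun μ hμ => (hhom i μ hμ).symm ▸ (Finset.mem_filter.mp hi).2

end LabelledQuiver

/-- Let `f` lie in the two-sided ideal generated by `F`. Then for every
labelled quiver `Q` such that all elements of `F` are uniformly compatible with `Q`,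
`f` is compatible with `Q` if and only if `f` is a `Q`-consequence of `F`. -/
theorem compatible_iff_qConsequence {R X : Type*} [CommRing R]
    (F : Set (FreeAlg R X)) (f : FreeAlg R X) (hf : MemIdeal F f)
    {V E : Type*} (Q : LabelledQuiver V E X) (hF : ∀ g ∈ F, Q.UniformlyCompatible g) :
    Q.Compatible f ↔ Q.QConsequence F f := by
  refine ⟨fun hc => ?_, And.left⟩
  obtain ⟨n, a, b, g, hgF, hsum⟩ := hf
  refine Q.qConsequence_of_eq_sum_single_mul_mul_single hF hc
    (Finset.univ.sigma fun i => (a i).coeff.support ×ˢ (b i).coeff.support)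
    (fun x => x.2.1) (fun x => x.2.2) (fun x => (a x.1).coeff x.2.1) (fun x => (b x.1).coeff x.2.2)
    (fun x => g x.1) (fun x hx => ?_) (fun x hx => ?_) (fun x => hgF x.1) ?_
  · exact Finsupp.mem_support_iff.mp (Finset.mem_product.mp (Finset.mem_sigma.mp hx).2).1
  · exact Finsupp.mem_support_iff.mp (Finset.mem_product.mp (Finset.mem_sigma.mp hx).2).2
  · rw [hsum, Finset.sum_sigma]
    refine Finset.sum_congr rfl fun i _ => ?_
    rw [Finset.sum_product]
    exact MonoidAlgebra.mul_mul_eq_sum_single_mul_mul_single _ _ _
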